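/- Fix an integer p ≥ 2 and set q = exp(iπ/p) ∈ ℂ. In B = A/I (the Nichols algebra of the braided vector space with braiding matrix q₁₁ = q₂₂ = q², q₁₂ = q₂₁ = q⁻¹), the p³ images of the monomials F1^r·F3^t·F2^s for 0 ≤ r,t,s ≤ p−1 form a ℂ-vector-space basis of B; in particular dim_ℂ B = p³. -/

import Mathlib

open scoped Complex

/-- The free associative unital `ℂ`-algebra on two generators. -/
noncomputable abbrev A := FreeAlgebra ℂ (Fin 2)

noncomputable def F1 : A := FreeAlgebra.ι ℂ 0
noncomputable def F2 : A := FreeAlgebra.ι ℂ 1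

/-- `q = exp(iπ/p)`. -/
noncomputable def qval (p : ℕ) : ℂ := Complex.exp (Real.pi * Complex.I / p)

/-- `F3 = F2·F1 − q⁻¹·F1·F2`. -/
noncomputable def F3 (p : ℕ) : A := F2 * F1 - (qval p)⁻¹ • (F1 * F2)

/-- The relation whose induced ring congruence realizes the quotient of `A` by the
two-sided ideal generated by the five defining relators of the Nichols algebra. -/
def nicholsRel (p : ℕ) : A → A → Prop := fun x y =>
  y = 0 ∧
    x ∈ ({F1 ^ 2 * F2 - (qval p + (qval p)⁻¹) • (F1 * F2 * F1) + F2 * F1 ^ 2,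
          F2 ^ 2 * F1 - (qval p + (qval p)⁻¹) • (F2 * F1 * F2) + F1 * F2 ^ 2,
          F1 ^ p, F3 p ^ p, F2 ^ p} : Set A)

/-- The Nichols algebra `B = A/I`. -/
noncomputable abbrev NicholsB (p : ℕ) := RingQuot (nicholsRel p)

/-- The image in `B` of the PBW monomial `F1^r · F3^t · F2^s`. -/
noncomputable def pbw (p : ℕ) (r t s : ℕ) : NicholsB p :=
  RingQuot.mkAlgHom ℂ (nicholsRel p) (F1 ^ r * F3 p ^ t * F2 ^ s)

/-!
The relations say exactly that `F3` `q`-commutes with the generators: `F3 F1 = q F1 F3` and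
`F2 F3 = q F3 F2`, while `F2 F1 = q⁻¹ F1 F2 + F3` by definition. Hence left multiplication by `F1`
and `F2` sends a monomial `F1^r F3^t F2^s` to a combination of such monomials, with the
`q`-integer `[r]_q` appearing when `F2` passes `F1^r`; as the relations kill monomials with an
exponent `≥ p`, the `p³` monomials with exponents `< p` span `B`.

For independence the same formulas define operators on the space with basis `e r t s`,
`r, t, s < p`. They satisfy the defining relations; for `F2^p = 0` the action of `F2` splits as a
sum `a + b` with `a b = q² b a`, and since `q²` is a primitive `p`-th root of unity the Gaussian
binomials `[p choose k]_{q²}` vanish for `0 < k < p`, so `(a + b)^p = a^p + b^p = 0`.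
Since `F1^r F3^t F2^s` maps `e 0 0 0` to `e r t s`, the monomials are independent in `B`.
-/

open Finset

section QNumbers

variable {K : Type*} [Field K]

noncomputable def qInt (q : K) : ℕ → K
  | 0 => 0
  | r + 1 => q ^ r + q⁻¹ * qInt q r

@[simp] lemma qInt_zero (q : K) : qInt q 0 = 0 := rfl

lemma qInt_succ (q : K) (r : ℕ) : qInt q (r + 1) = q ^ r + q⁻¹ * qInt q r := rfl

lemma qInt_mul_sub_inv (q : K) (r : ℕ) : qInt q r * (q - q⁻¹) = q ^ r - q⁻¹ ^ r := by
  induction r with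
  | zero => simp
  | succ r ih => rw [qInt_succ, add_mul, mul_assoc, ih]; ring

lemma qInt_eq_zero_of_pow_eq_neg_one {q : K} {n : ℕ} (hq : q ≠ 0) (hq2 : q ^ 2 ≠ 1)
    (hn : q ^ n = -1) : qInt q n = 0 := by
  have hsub : q - q⁻¹ ≠ 0 := by
    intro h
    apply hq2
    field_simp at h
    linear_combination h
  have h := qInt_mul_sub_inv q n
  rw [inv_pow, hn, inv_neg, inv_one, sub_neg_eq_add, neg_add_cancel] at h
  exact (mul_eq_zero.mp h).resolve_right hsub

end QNumbers

section GaussBinom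

variable {R : Type*} [CommRing R]

def gaussBinom (z : R) : ℕ → ℕ → R
  | _, 0 => 1
  | 0, _ + 1 => 0
  | n + 1, k + 1 => gaussBinom z n k + z ^ (k + 1) * gaussBinom z n (k + 1)

@[simp] lemma gaussBinom_zero_right (z : R) (n : ℕ) : gaussBinom z n 0 = 1 := by
  cases n <;> rfl

lemma gaussBinom_succ_succ (z : R) (n k : ℕ) :
    gaussBinom z (n + 1) (k + 1) = gaussBinom z n k + z ^ (k + 1) * gaussBinom z n (k + 1) := rfl

lemma gaussBinom_eq_zero_of_lt (z : R) {n k : ℕ} (h : n < k) : gaussBinom z n k = 0 := by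
  induction n generalizing k with
  | zero => obtain ⟨k, rfl⟩ := Nat.exists_eq_add_one_of_ne_zero (by omega : k ≠ 0); rfl
  | succ n ih =>
    obtain ⟨k, rfl⟩ := Nat.exists_eq_add_one_of_ne_zero (by omega : k ≠ 0)
    rw [gaussBinom_succ_succ, ih (by omega), ih (by omega), mul_zero, add_zero]

@[simp] lemma gaussBinom_self (z : R) (n : ℕ) : gaussBinom z n n = 1 := by
  induction n with
  | zero => rfl
  | succ n ih =>
    rw [gaussBinom_succ_succ, ih, gaussBinom_eq_zero_of_lt z (by omega), mul_zero, add_zero]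

lemma gaussBinom_add_mul_prod (z : R) (m k : ℕ) :
    gaussBinom z (m + k) k * ∏ j ∈ range k, (1 - z ^ (j + 1)) =
      ∏ j ∈ range k, (1 - z ^ (m + j + 1)) := by
  induction k generalizing m with
  | zero => simp
  | succ k ih =>
    induction m with
    | zero => simp
    | succ m ihm =>
      have hQ : ∏ j ∈ range (k + 1), (1 - z ^ (m + j + 1))
          = (1 - z ^ (m + 1)) * ∏ j ∈ range k, (1 - z ^ (m + 1 + j + 1)) := by
        rw [prod_range_succ', mul_comm]
        congr 2 with j
        ring_nf
      rw [show m + 1 + (k + 1) = m + 1 + k + 1 by omega, gaussBinom_succ_succ,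
        show m + 1 + k = m + (k + 1) by omega, add_mul, mul_assoc, ihm, hQ,
        prod_range_succ, ← mul_assoc, show m + (k + 1) = m + 1 + k by omega, ih,
        prod_range_succ]
      ring

lemma gaussBinom_eq_zero_of_isPrimitiveRoot [IsDomain R] {z : R} {n k : ℕ}
    (hz : IsPrimitiveRoot z n) (hk0 : k ≠ 0) (hkn : k < n) : gaussBinom z n k = 0 := by
  have h := gaussBinom_add_mul_prod z (n - k) k
  rw [Nat.sub_add_cancel hkn.le] at h
  have hvanish : ∏ j ∈ range k, (1 - z ^ (n - k + j + 1)) = 0 :=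
    prod_eq_zero (mem_range.mpr (Nat.sub_one_lt hk0))
      (by rw [show n - k + (k - 1) + 1 = n by omega, hz.pow_eq_one, sub_self])
  have hunit : ∏ j ∈ range k, (1 - z ^ (j + 1)) ≠ 0 :=
    prod_ne_zero_iff.mpr fun j hj =>
      sub_ne_zero.mpr (hz.pow_ne_one_of_pos_of_lt (by omega) (by simp at hj; omega)).symm
  exact (mul_eq_zero.mp (h.trans hvanish)).resolve_right hunit

variable {S : Type*} [Semiring S] [Algebra R S]

lemma mul_pow_eq_smul_of_mul_eq_smul {z : R} {a b : S} (h : a * b = z • (b * a)) (k : ℕ) :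
    a * b ^ k = z ^ k • (b ^ k * a) := by
  induction k with
  | zero => simp
  | succ k ih =>
    rw [pow_succ, ← mul_assoc, ih, smul_mul_assoc, mul_assoc, h, mul_smul_comm, smul_smul,
      ← mul_assoc, ← pow_succ, ← pow_succ]

lemma add_pow_eq_sum_gaussBinom {z : R} {a b : S} (h : a * b = z • (b * a)) (n : ℕ) :
    (a + b) ^ n = ∑ x ∈ antidiagonal n, gaussBinom z n x.1 • (b ^ x.1 * a ^ x.2) := by
  induction n with
  | zero => simp
  | succ n ih =>
    have hstep : ∀ i j : ℕ, (a + b) * (b ^ i * a ^ j)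
        = z ^ i • (b ^ i * a ^ (j + 1)) + b ^ (i + 1) * a ^ j := by
      intro i j
      rw [add_mul, ← mul_assoc, mul_pow_eq_smul_of_mul_eq_smul h, smul_mul_assoc, mul_assoc,
        ← pow_succ', ← mul_assoc, ← pow_succ']
    have hshift :
        ∑ x ∈ antidiagonal n, (z ^ x.1 * gaussBinom z n x.1) • (b ^ x.1 * a ^ (x.2 + 1))
          = a ^ (n + 1) + ∑ x ∈ antidiagonal n,
              (z ^ (x.1 + 1) * gaussBinom z n (x.1 + 1)) • (b ^ (x.1 + 1) * a ^ x.2) := by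
      have := Nat.sum_antidiagonal_succ' (n := n)
        (f := fun x => (z ^ x.1 * gaussBinom z n x.1) • (b ^ x.1 * a ^ x.2))
      rw [gaussBinom_eq_zero_of_lt z (Nat.lt_succ_self n), mul_zero, zero_smul, zero_add] at this
      rw [← this, Nat.sum_antidiagonal_succ]
      simp
    rw [pow_succ', ih, mul_sum, Nat.sum_antidiagonal_succ]
    simp only [mul_smul_comm, hstep, smul_add, smul_smul, sum_add_distrib, gaussBinom_succ_succ,
      add_smul, mul_comm (gaussBinom z n _), hshift, gaussBinom_zero_right, one_smul, pow_zero,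
      one_mul]
    abel

lemma add_pow_eq_add_pow_of_isPrimitiveRoot [IsDomain R] {z : R} {a b : S} {n : ℕ}
    (hz : IsPrimitiveRoot z n) (hn : n ≠ 0) (h : a * b = z • (b * a)) :
    (a + b) ^ n = a ^ n + b ^ n := by
  rw [add_pow_eq_sum_gaussBinom h, sum_eq_add_of_mem (0, n) (n, 0) (by simp) (by simp)
    (by simp [Ne.symm hn])]
  · simp
  · rintro ⟨i, j⟩ hij ⟨hi, hj⟩
    rw [HasAntidiagonal.mem_antidiagonal] at hij
    have hi0 : i ≠ 0 := by rintro rfl; simp_all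
    have hin : i < n := by
      by_contra! hle
      exact hj (by simp only [Prod.mk.injEq]; omega)
    rw [gaussBinom_eq_zero_of_isPrimitiveRoot hz hi0 hin, zero_smul]

end GaussBinom

lemma pow_apply_eq_prod_smul {K M : Type*} [CommSemiring K] [AddCommMonoid M] [Module K M]
    (f : Module.End K M) {v : ℕ → M} {c : ℕ → K} (hf : ∀ m, f (v m) = c m • v (m + 1))
    (m n : ℕ) : (f ^ n) (v m) = (∏ i ∈ range n, c (m + i)) • v (m + n) := by
  induction n with
  | zero => simp
  | succ n ih =>
    rw [pow_succ', Module.End.mul_apply, ih, map_smul, hf, smul_smul, prod_range_succ, add_assoc]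

lemma pow_apply_eq_zero_of_shift {K M : Type*} [CommSemiring K] [AddCommMonoid M] [Module K M]
    (f : Module.End K M) {v : ℕ → M} {c : ℕ → K} (hf : ∀ m, f (v m) = c m • v (m + 1)) {N : ℕ}
    (hv : ∀ m, N ≤ m → v m = 0) (m : ℕ) : (f ^ N) (v m) = 0 := by
  rw [pow_apply_eq_prod_smul f hf, hv _ (by omega), smul_zero]

section PBWRelations

variable {K S : Type*} [Field K] [Ring S] [Algebra K S] {q : K} {x1 x2 x3 : S}

lemma serre_left_eq (hq : q ≠ 0) (hx3 : x3 = x2 * x1 - q⁻¹ • (x1 * x2)) :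
    x3 * x1 - q • (x1 * x3) = x1 ^ 2 * x2 - (q + q⁻¹) • (x1 * x2 * x1) + x2 * x1 ^ 2 := by
  subst hx3
  simp only [sq, mul_sub, sub_mul, mul_smul_comm, smul_mul_assoc, smul_sub, smul_smul,
    mul_inv_cancel₀ hq, one_smul, add_smul, mul_assoc]
  abel

lemma serre_right_eq (hq : q ≠ 0) (hx3 : x3 = x2 * x1 - q⁻¹ • (x1 * x2)) :
    x2 * x3 - q • (x3 * x2) = x2 ^ 2 * x1 - (q + q⁻¹) • (x2 * x1 * x2) + x1 * x2 ^ 2 := by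
  subst hx3
  simp only [sq, mul_sub, sub_mul, mul_smul_comm, smul_mul_assoc, smul_sub, smul_smul,
    mul_inv_cancel₀ hq, one_smul, add_smul, mul_assoc]
  abel

lemma mul_pow_succ_eq (h21 : x2 * x1 = q⁻¹ • (x1 * x2) + x3) (h31 : x3 * x1 = q • (x1 * x3))
    (r : ℕ) :
    x2 * x1 ^ (r + 1) = q⁻¹ ^ (r + 1) • (x1 ^ (r + 1) * x2) + qInt q (r + 1) • (x1 ^ r * x3) := by
  induction r with
  | zero => simp [qInt_succ, h21]
  | succ r ih =>
    rw [pow_succ' x1 (r + 1), ← mul_assoc, h21, add_mul, smul_mul_assoc, mul_assoc, ih,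
      mul_pow_eq_smul_of_mul_eq_smul h31, qInt_succ (r := r + 1)]
    simp only [mul_add, mul_smul_comm, smul_add, smul_smul, ← mul_assoc, ← pow_succ', add_smul]
    module

lemma mul_pbwMonomial_eq (h21 : x2 * x1 = q⁻¹ • (x1 * x2) + x3) (h31 : x3 * x1 = q • (x1 * x3))
    (h23 : x2 * x3 = q • (x3 * x2)) (r t s : ℕ) :
    x2 * (x1 ^ r * x3 ^ t * x2 ^ s) = (q⁻¹ ^ r * q ^ t) • (x1 ^ r * x3 ^ t * x2 ^ (s + 1))
      + qInt q r • (x1 ^ (r - 1) * x3 ^ (t + 1) * x2 ^ s) := by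
  have hx2 : x2 * (x3 ^ t * x2 ^ s) = q ^ t • (x3 ^ t * x2 ^ (s + 1)) := by
    rw [← mul_assoc, mul_pow_eq_smul_of_mul_eq_smul h23, smul_mul_assoc, mul_assoc, ← pow_succ']
  cases r with
  | zero => simp [hx2]
  | succ r =>
    rw [mul_assoc (x1 ^ (r + 1)), ← mul_assoc x2, mul_pow_succ_eq h21 h31, add_mul,
      smul_mul_assoc, smul_mul_assoc, mul_assoc, hx2, mul_assoc (x1 ^ r), ← mul_assoc x3,
      ← pow_succ', Nat.add_sub_cancel, mul_smul_comm, smul_smul]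
    simp only [mul_assoc]

end PBWRelations

lemma qval_ne_zero (p : ℕ) : qval p ≠ 0 := Complex.exp_ne_zero _

lemma qval_pow_self {p : ℕ} (hp : p ≠ 0) : qval p ^ p = -1 := by
  rw [qval, ← Complex.exp_nat_mul, mul_div_cancel₀ _ (Nat.cast_ne_zero.mpr hp),
    Complex.exp_pi_mul_I]

lemma isPrimitiveRoot_qval_sq {p : ℕ} (hp : p ≠ 0) : IsPrimitiveRoot (qval p ^ 2) p := by
  rw [qval, ← Complex.exp_nat_mul]
  convert Complex.isPrimitiveRoot_exp p hp using 2
  push_cast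
  ring

lemma qInt_qval_self {p : ℕ} (hp : 2 ≤ p) : qInt (qval p) p = 0 :=
  qInt_eq_zero_of_pow_eq_neg_one (qval_ne_zero p)
    ((isPrimitiveRoot_qval_sq (by omega)).ne_one (by omega)) (qval_pow_self (by omega))

namespace Nichols

open Submodule

variable {p : ℕ}

abbrev mk (p : ℕ) : A →ₐ[ℂ] NicholsB p := RingQuot.mkAlgHom ℂ (nicholsRel p)

lemma mk_eq_zero {x : A} (hx : nicholsRel p x 0) : mk p x = 0 := by
  simpa using RingQuot.mkAlgHom_rel ℂ hx

lemma mk_F1_pow : mk p F1 ^ p = 0 := by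
  rw [← map_pow]; exact mk_eq_zero ⟨rfl, by simp⟩

lemma mk_F2_pow : mk p F2 ^ p = 0 := by
  rw [← map_pow]; exact mk_eq_zero ⟨rfl, by simp⟩

lemma mk_F3_pow : mk p (F3 p) ^ p = 0 := by
  rw [← map_pow]; exact mk_eq_zero ⟨rfl, by simp⟩

lemma mk_F3 : mk p (F3 p) = mk p F2 * mk p F1 - (qval p)⁻¹ • (mk p F1 * mk p F2) := by
  rw [F3, map_sub, map_smul, map_mul, map_mul]

lemma mk_F2_mul_F1 : mk p F2 * mk p F1 = (qval p)⁻¹ • (mk p F1 * mk p F2) + mk p (F3 p) := by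
  rw [mk_F3]; abel

lemma mk_F3_mul_F1 : mk p (F3 p) * mk p F1 = qval p • (mk p F1 * mk p (F3 p)) := by
  rw [← sub_eq_zero, serre_left_eq (qval_ne_zero p) mk_F3]
  simpa using mk_eq_zero (p := p) ⟨rfl, Set.mem_insert _ _⟩

lemma mk_F2_mul_F3 : mk p F2 * mk p (F3 p) = qval p • (mk p (F3 p) * mk p F2) := by
  rw [← sub_eq_zero, serre_right_eq (qval_ne_zero p) mk_F3]
  simpa using mk_eq_zero (p := p) ⟨rfl, Set.mem_insert_of_mem _ (Set.mem_insert _ _)⟩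

lemma pbw_eq (r t s : ℕ) : pbw p r t s = mk p F1 ^ r * mk p (F3 p) ^ t * mk p F2 ^ s := by
  simp [pbw]

lemma pbw_eq_zero {r t s : ℕ} (h : ¬(r < p ∧ t < p ∧ s < p)) : pbw p r t s = 0 := by
  rw [pbw_eq]
  rcases not_and_or.mp h with h | h
  · rw [pow_eq_zero_of_le (by omega) mk_F1_pow, zero_mul, zero_mul]
  rcases not_and_or.mp h with h | h
  · rw [pow_eq_zero_of_le (by omega) mk_F3_pow, mul_zero, zero_mul]
  · rw [pow_eq_zero_of_le (by omega) mk_F2_pow, mul_zero]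

lemma mk_F1_mul_pbw (r t s : ℕ) : mk p F1 * pbw p r t s = pbw p (r + 1) t s := by
  simp only [pbw_eq, ← mul_assoc, ← pow_succ']

lemma mk_F2_mul_pbw (r t s : ℕ) :
    mk p F2 * pbw p r t s = ((qval p)⁻¹ ^ r * qval p ^ t) • pbw p r t (s + 1)
      + qInt (qval p) r • pbw p (r - 1) (t + 1) s := by
  simp only [pbw_eq]
  exact mul_pbwMonomial_eq mk_F2_mul_F1 mk_F3_mul_F1 mk_F2_mul_F3 r t s

noncomputable def pbwFamily (p : ℕ) (rts : Fin p × Fin p × Fin p) : NicholsB p :=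
  pbw p rts.1 rts.2.1 rts.2.2

lemma pbw_mem_span (r t s : ℕ) : pbw p r t s ∈ span ℂ (Set.range (pbwFamily p)) := by
  by_cases h : r < p ∧ t < p ∧ s < p
  · exact subset_span ⟨(⟨r, h.1⟩, ⟨t, h.2.1⟩, ⟨s, h.2.2⟩), rfl⟩
  · rw [pbw_eq_zero h]
    exact zero_mem _

lemma mul_mem_span_pbwFamily {b v : NicholsB p}
    (hb : ∀ r t s, b * pbw p r t s ∈ span ℂ (Set.range (pbwFamily p)))
    (hv : v ∈ span ℂ (Set.range (pbwFamily p))) : b * v ∈ span ℂ (Set.range (pbwFamily p)) :=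
  (span_le.mpr (by rintro _ ⟨i, rfl⟩; exact hb _ _ _) :
    span ℂ (Set.range (pbwFamily p)) ≤ (span ℂ (Set.range (pbwFamily p))).comap
      (LinearMap.mulLeft ℂ b)) hv

lemma span_pbwFamily (p : ℕ) : span ℂ (Set.range (pbwFamily p)) = ⊤ := by
  set P := span ℂ (Set.range (pbwFamily p))
  have hmul (x : A) : ∀ v ∈ P, mk p x * v ∈ P := by
    induction x using FreeAlgebra.induction with
    | grade0 c =>
      intro v hv
      rw [AlgHom.commutes, ← Algebra.smul_def]
      exact P.smul_mem c hv
    | grade1 i =>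
      intro v hv
      refine mul_mem_span_pbwFamily (fun r t s => ?_) hv
      fin_cases i
      · change mk p F1 * _ ∈ P
        rw [mk_F1_mul_pbw]
        exact pbw_mem_span _ _ _
      · change mk p F2 * _ ∈ P
        rw [mk_F2_mul_pbw]
        exact add_mem (P.smul_mem _ (pbw_mem_span _ _ _)) (P.smul_mem _ (pbw_mem_span _ _ _))
    | mul a b ha hb =>
      intro v hv
      rw [map_mul, mul_assoc]
      exact ha _ (hb v hv)
    | add a b ha hb =>
      intro v hv
      rw [map_add, add_mul]
      exact add_mem (ha v hv) (hb v hv)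
  refine eq_top_iff'.mpr fun b => ?_
  obtain ⟨x, rfl⟩ := RingQuot.mkAlgHom_surjective ℂ (nicholsRel p) b
  simpa using hmul x 1 (by simpa [pbw_eq] using pbw_mem_span (p := p) 0 0 0)

abbrev V (p : ℕ) := Fin p × Fin p × Fin p →₀ ℂ

/-- The basis vector of index `(r, t, s)`, and `0` when an index is `≥ p`; with this convention the
actions of the generators below need no range conditions. -/
noncomputable def e (p r t s : ℕ) : V p :=
  if h : r < p ∧ t < p ∧ s < p then Finsupp.single (⟨r, h.1⟩, ⟨t, h.2.1⟩, ⟨s, h.2.2⟩) 1 else 0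

lemma e_eq_zero {r t s : ℕ} (h : ¬(r < p ∧ t < p ∧ s < p)) : e p r t s = 0 := dif_neg h

lemma e_fin (i : Fin p × Fin p × Fin p) : e p i.1 i.2.1 i.2.2 = Finsupp.single i 1 := by
  simp [e]

lemma endo_ext {f g : Module.End ℂ (V p)} (h : ∀ r t s, f (e p r t s) = g (e p r t s)) : f = g :=
  Finsupp.basisSingleOne.ext fun i => by simpa [e_fin] using h i.1 i.2.1 i.2.2

noncomputable def endOfE (f : ℕ → ℕ → ℕ → V p) : Module.End ℂ (V p) :=
  Finsupp.linearCombination ℂ fun i => f i.1 i.2.1 i.2.2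

lemma endOfE_apply_e {f : ℕ → ℕ → ℕ → V p}
    (hf : ∀ r t s, ¬(r < p ∧ t < p ∧ s < p) → f r t s = 0) (r t s : ℕ) :
    endOfE f (e p r t s) = f r t s := by
  by_cases h : r < p ∧ t < p ∧ s < p
  · simp [endOfE, e, h]
  · rw [e_eq_zero h, map_zero, hf r t s h]

noncomputable def act1 (p : ℕ) : Module.End ℂ (V p) :=
  endOfE fun r t s => e p (r + 1) t s

noncomputable def raiseS (p : ℕ) : Module.End ℂ (V p) :=
  endOfE fun r t s => ((qval p)⁻¹ ^ r * qval p ^ t) • e p r t (s + 1)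

noncomputable def lowerR (p : ℕ) : Module.End ℂ (V p) :=
  endOfE fun r t s => qInt (qval p) r • e p (r - 1) (t + 1) s

noncomputable def act2 (p : ℕ) : Module.End ℂ (V p) := raiseS p + lowerR p

noncomputable def act3 (p : ℕ) : Module.End ℂ (V p) :=
  act2 p * act1 p - (qval p)⁻¹ • (act1 p * act2 p)

lemma act1_e (r t s : ℕ) : act1 p (e p r t s) = e p (r + 1) t s :=
  endOfE_apply_e (fun _ _ _ h => e_eq_zero (by omega)) r t s

lemma raiseS_e (r t s : ℕ) :
    raiseS p (e p r t s) = ((qval p)⁻¹ ^ r * qval p ^ t) • e p r t (s + 1) :=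
  endOfE_apply_e (fun _ _ _ h => by rw [e_eq_zero (by omega), smul_zero]) r t s

lemma lowerR_e (hp : 2 ≤ p) (r t s : ℕ) :
    lowerR p (e p r t s) = qInt (qval p) r • e p (r - 1) (t + 1) s := by
  refine endOfE_apply_e (fun r t s h => ?_) r t s
  by_cases hr : r = p
  · rw [hr, qInt_qval_self hp, zero_smul]
  · rw [e_eq_zero (by omega), smul_zero]

lemma act2_e (hp : 2 ≤ p) (r t s : ℕ) :
    act2 p (e p r t s) = ((qval p)⁻¹ ^ r * qval p ^ t) • e p r t (s + 1)
      + qInt (qval p) r • e p (r - 1) (t + 1) s := by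
  rw [act2, LinearMap.add_apply, raiseS_e, lowerR_e hp]

lemma qInt_smul_e_pred (q : ℂ) (r t s : ℕ) :
    qInt q r • e p (r - 1 + 1) t s = qInt q r • e p r t s := by
  cases r <;> simp

lemma act3_e (hp : 2 ≤ p) (r t s : ℕ) : act3 p (e p r t s) = qval p ^ r • e p r (t + 1) s := by
  simp only [act3, LinearMap.sub_apply, LinearMap.smul_apply, Module.End.mul_apply, act1_e,
    act2_e hp, map_add, map_smul, qInt_smul_e_pred, qInt_succ, Nat.add_sub_cancel]
  module

lemma act3_mul_act1 (hp : 2 ≤ p) : act3 p * act1 p = qval p • (act1 p * act3 p) :=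
  endo_ext fun r t s => by
    simp only [Module.End.mul_apply, LinearMap.smul_apply, act1_e, act3_e hp, map_smul]
    module

lemma act2_mul_act3 (hp : 2 ≤ p) : act2 p * act3 p = qval p • (act3 p * act2 p) :=
  endo_ext fun r t s => by
    simp only [Module.End.mul_apply, LinearMap.smul_apply, act2_e hp, act3_e hp, map_smul,
      map_add, smul_add]
    cases r with
    | zero => simp only [qInt_zero, zero_smul, smul_zero]; module
    | succ r => simp only [Nat.add_sub_cancel]; module

lemma raiseS_mul_lowerR (hp : 2 ≤ p) :
    raiseS p * lowerR p = qval p ^ 2 • (lowerR p * raiseS p) :=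
  endo_ext fun r t s => by
    simp only [Module.End.mul_apply, LinearMap.smul_apply, raiseS_e, lowerR_e hp, map_smul]
    cases r with
    | zero => simp
    | succ r =>
      have := qval_ne_zero p
      simp only [Nat.add_sub_cancel, smul_smul, inv_pow]
      congr 1
      field_simp
      ring

lemma act1_pow_self : act1 p ^ p = 0 :=
  endo_ext fun r t s => pow_apply_eq_zero_of_shift (act1 p) (v := fun m => e p m t s)
    (c := fun _ => 1) (fun m => by simp [act1_e]) (fun m hm => e_eq_zero (by omega)) r

lemma act3_pow_self (hp : 2 ≤ p) : act3 p ^ p = 0 :=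
  endo_ext fun r t s => pow_apply_eq_zero_of_shift (act3 p) (v := fun m => e p r m s)
    (fun m => act3_e hp r m s) (fun m hm => e_eq_zero (by omega)) t

lemma raiseS_pow_self : raiseS p ^ p = 0 :=
  endo_ext fun r t s => pow_apply_eq_zero_of_shift (raiseS p) (v := fun m => e p r t m)
    (fun m => raiseS_e r t m) (fun m hm => e_eq_zero (by omega)) s

lemma lowerR_pow_self (hp : 2 ≤ p) : lowerR p ^ p = 0 :=
  endo_ext fun r t s =>
    pow_apply_eq_zero_of_shift (lowerR p) (v := fun m => e p (r - m) (t + m) s)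
      (fun m => by rw [lowerR_e hp, Nat.sub_sub, add_assoc]) (fun m hm => e_eq_zero (by omega)) 0

lemma act2_pow_self (hp : 2 ≤ p) : act2 p ^ p = 0 := by
  rw [act2, add_pow_eq_add_pow_of_isPrimitiveRoot (isPrimitiveRoot_qval_sq (by omega)) (by omega)
    (raiseS_mul_lowerR hp), raiseS_pow_self, lowerR_pow_self hp, add_zero]

noncomputable def repA (p : ℕ) : A →ₐ[ℂ] Module.End ℂ (V p) :=
  FreeAlgebra.lift ℂ ![act1 p, act2 p]

lemma repA_F1 : repA p F1 = act1 p := by simp [repA, F1]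

lemma repA_F2 : repA p F2 = act2 p := by simp [repA, F2]

lemma repA_F3 : repA p (F3 p) = act3 p := by
  rw [F3, map_sub, map_smul, map_mul, map_mul, repA_F1, repA_F2, act3]

lemma repA_nicholsRel (hp : 2 ≤ p) ⦃x y : A⦄ (h : nicholsRel p x y) : repA p x = repA p y := by
  obtain ⟨rfl, hx⟩ := h
  simp only [Set.mem_insert_iff, Set.mem_singleton_iff] at hx
  rcases hx with rfl | rfl | rfl | rfl | rfl <;>
    simp only [map_add, map_sub, map_smul, map_mul, map_pow, map_zero, repA_F1, repA_F2, repA_F3]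
  · rw [← serre_left_eq (x3 := act3 p) (qval_ne_zero p) rfl, act3_mul_act1 hp, sub_self]
  · rw [← serre_right_eq (x3 := act3 p) (qval_ne_zero p) rfl, act2_mul_act3 hp, sub_self]
  · exact act1_pow_self
  · exact act3_pow_self hp
  · exact act2_pow_self hp

noncomputable def repB (hp : 2 ≤ p) : NicholsB p →ₐ[ℂ] Module.End ℂ (V p) :=
  RingQuot.liftAlgHom ℂ ⟨repA p, repA_nicholsRel hp⟩

lemma repB_pbw_apply (hp : 2 ≤ p) (r t s : ℕ) :
    repB hp (pbw p r t s) (e p 0 0 0) = e p r t s := by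
  have h2 : (act2 p ^ s) (e p 0 0 0) = e p 0 0 s := by
    simpa using pow_apply_eq_prod_smul (act2 p) (v := fun m => e p 0 0 m) (c := fun _ => 1)
      (fun m => by simp [act2_e hp]) 0 s
  have h3 : (act3 p ^ t) (e p 0 0 s) = e p 0 t s := by
    simpa using pow_apply_eq_prod_smul (act3 p) (v := fun m => e p 0 m s) (c := fun _ => 1)
      (fun m => by simp [act3_e hp]) 0 t
  have h1 : (act1 p ^ r) (e p 0 t s) = e p r t s := by
    simpa using pow_apply_eq_prod_smul (act1 p) (v := fun m => e p m t s) (c := fun _ => 1)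
      (fun m => by simp [act1_e]) 0 r
  simp only [repB, pbw, RingQuot.liftAlgHom_mkAlgHom_apply, map_mul, map_pow, repA_F1, repA_F2,
    repA_F3, Module.End.mul_apply, h2, h3, h1]

lemma linearIndependent_pbwFamily (hp : 2 ≤ p) : LinearIndependent ℂ (pbwFamily p) := by
  refine LinearIndependent.of_comp ((LinearMap.applyₗ (e p 0 0 0)).comp (repB hp).toLinearMap) ?_
  convert (Finsupp.basisSingleOne (R := ℂ) (ι := Fin p × Fin p × Fin p)).linearIndependent
  ext1 i
  simp [pbwFamily, repB_pbw_apply, e_fin]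

end Nichols

theorem pbw_basis (p : ℕ) (hp : 2 ≤ p) :
    LinearIndependent ℂ
        (fun rts : Fin p × Fin p × Fin p =>
          pbw p rts.1.val rts.2.1.val rts.2.2.val) ∧
    Submodule.span ℂ
        (Set.range (fun rts : Fin p × Fin p × Fin p =>
          pbw p rts.1.val rts.2.1.val rts.2.2.val)) = ⊤ ∧
    Module.finrank ℂ (NicholsB p) = p ^ 3 := by
  have hli := Nichols.linearIndependent_pbwFamily hp
  have hspan := Nichols.span_pbwFamily p
  refine ⟨hli, hspan, ?_⟩
  rw [Module.finrank_eq_card_basis (Module.Basis.mk hli hspan.ge)]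
  simp only [Fintype.card_prod, Fintype.card_fin]
  ring
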